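/- Let X ⊆ ℝ^{d_x} and Y ⊆ ℝ^{d_y} be nonempty closed convex sets and let f : ℝ^{d_x} × ℝ^{d_y} → ℝ be differentiable with M-Lipschitz gradient (M > 0). Fix x ∈ X, y ∈ Y, vectors u ∈ ℝ^{d_x}, v ∈ ℝ^{d_y}, and step sizes η_x, η_y > 0. Define x⁺ = Π_X(x − η_x u), y⁺ = Π_Y(y + η_y v), ũ = (x − x⁺)/η_x, and ṽ = (y⁺ − y)/η_y. Then: −f(x⁺, y⁺) ≤ −f(x, y) + η_x ⟨u, ũ⟩ + ( η_x² M/2 + η_x² η_y M² + η_x²/(2η_y) )·‖ũ‖² + (η_y/2)·‖∇_x f(x,y) − u‖² − ( η_y/4 − η_y² M/2 )·‖ṽ‖² + (η_y/2)·‖∇_y f(x,y) − v‖². -/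

import Mathlib

/-!
Two applications of the descent lemma (a function with `M`-Lipschitz gradient lies above its
linearization minus `M/2 ‖·‖²`), first in `y` at fixed `x`, then in `x` at fixed `y⁺`, bound
`f(x⁺, y⁺)` from below. The `y`-step is controlled by the variational inequality of the
projection, `‖y⁺ - y‖² ≤ η_y ⟪v, y⁺ - y⟫`, and the three cross terms (the change of `∇_x f`
between `y` and `y⁺`, and the errors `∇_x f - u`, `∇_y f - v`) by Young's inequality.
-/

open Set
open scoped RealInnerProductSpace

noncomputable section

abbrev Euc (n : ℕ) := EuclideanSpace ℝ (Fin n)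

lemma add_deriv_sub_half_le_of_deriv_sub_le {φ φ' : ℝ → ℝ} {K : ℝ}
    (hφ : ∀ t, HasDerivAt φ (φ' t) t) (hK : ∀ t ∈ Ioo (0 : ℝ) 1, φ' 0 - φ' t ≤ K * t) :
    φ 0 + φ' 0 - K / 2 ≤ φ 1 := by
  set ψ : ℝ → ℝ := fun t => φ t - t * φ' 0 + K / 2 * t ^ 2
  have hψ : ∀ t, HasDerivAt ψ (φ' t - φ' 0 + K * t) t := fun t => by
    refine (((hφ t).sub ((hasDerivAt_id' t).mul_const (φ' 0))).add
      ((hasDerivAt_pow 2 t).const_mul (K / 2))).congr_deriv ?_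
    push_cast; ring
  have hmono : MonotoneOn ψ (Icc 0 1) := by
    refine monotoneOn_of_hasDerivWithinAt_nonneg (convex_Icc 0 1)
      (continuous_iff_continuousAt.2 fun t => (hψ t).continuousAt).continuousOn
      (fun t _ => (hψ t).hasDerivWithinAt) fun t ht => ?_
    rw [interior_Icc] at ht
    linarith [hK t ht]
  have := hmono (left_mem_Icc.mpr zero_le_one) (right_mem_Icc.mpr zero_le_one) zero_le_one
  simp only [ψ] at this
  linarith

lemma mul_le_half_mul_sq_add_sq_div {ε : ℝ} (hε : 0 < ε) (a b : ℝ) :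
    a * b ≤ ε / 2 * a ^ 2 + b ^ 2 / (2 * ε) := by
  have hsq : 0 ≤ (ε * a - b) ^ 2 / (2 * ε) := by positivity
  have hexpand : (ε * a - b) ^ 2 / (2 * ε) = ε / 2 * a ^ 2 + b ^ 2 / (2 * ε) - a * b := by
    field_simp; ring
  linarith

lemma le_and_le_of_sqrt_sq_add_sq_le {a b c : ℝ} (h : √(a ^ 2 + b ^ 2) ≤ c) : a ≤ c ∧ b ≤ c :=
  ⟨(le_abs_self a).trans ((Real.abs_le_sqrt (by nlinarith [sq_nonneg b])).trans h),
    (le_abs_self b).trans ((Real.abs_le_sqrt (by nlinarith [sq_nonneg a])).trans h)⟩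

section InnerProductSpace

variable {E : Type*} [NormedAddCommGroup E] [InnerProductSpace ℝ E]

lemma hasDerivAt_comp_add_smul [CompleteSpace E] {g : E → ℝ} {g' : E → E}
    (hg : ∀ p, HasGradientAt g (g' p) p) (a d : E) (t : ℝ) :
    HasDerivAt (fun s : ℝ => g (a + s • d)) ⟪g' (a + t • d), d⟫ t := by
  have hline : HasDerivAt (fun s : ℝ => a + s • d) d t := by
    simpa using ((hasDerivAt_id t).smul_const d).const_add a
  have := (hg (a + t • d)).hasFDerivAt.comp_hasDerivAt t hline
  simp only [InnerProductSpace.toDual_apply_apply] at this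
  exact this

lemma le_image_of_gradient_lipschitz [CompleteSpace E] {g : E → ℝ} {g' : E → E} {L : ℝ}
    (hg : ∀ p, HasGradientAt g (g' p) p) {a : E} (hlip : ∀ p, ‖g' p - g' a‖ ≤ L * ‖p - a‖)
    (b : E) : g a + ⟪g' a, b - a⟫ - L / 2 * ‖b - a‖ ^ 2 ≤ g b := by
  set d := b - a
  have key := add_deriv_sub_half_le_of_deriv_sub_le (K := L * ‖d‖ ^ 2)
    (hasDerivAt_comp_add_smul hg a d) fun t ht => by
      calc ⟪g' (a + (0 : ℝ) • d), d⟫ - ⟪g' (a + t • d), d⟫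
          = ⟪g' a - g' (a + t • d), d⟫ := by rw [zero_smul, add_zero, inner_sub_left]
        _ ≤ ‖g' (a + t • d) - g' a‖ * ‖d‖ := by
          rw [← norm_sub_rev]; exact real_inner_le_norm _ _
        _ ≤ L * (t * ‖d‖) * ‖d‖ := by
          gcongr
          simpa [norm_smul, abs_of_pos ht.1] using hlip (a + t • d)
        _ = L * ‖d‖ ^ 2 * t := by ring
  simpa [d, mul_div_right_comm] using key

lemma real_inner_sub_sub_nonpos_of_forall_norm_sub_le {K : Set E} (hK : Convex ℝ K) {z p w : E}
    (hp : p ∈ K) (hmin : ∀ w ∈ K, ‖z - p‖ ≤ ‖z - w‖) (hw : w ∈ K) : ⟪z - p, w - p⟫ ≤ 0 := by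
  have : Nonempty K := ⟨⟨p, hp⟩⟩
  refine (norm_eq_iInf_iff_real_inner_le_zero hK hp).1 ?_ w hw
  exact le_antisymm (le_ciInf fun w => hmin w w.2)
    (ciInf_le (f := fun w : K => ‖z - w‖) ⟨0, forall_mem_range.2 fun _ => norm_nonneg _⟩ ⟨p, hp⟩)

lemma norm_sq_le_inner_of_forall_norm_sub_le {K : Set E} (hK : Convex ℝ K) {y v p : E} {η : ℝ}
    (hy : y ∈ K) (hp : p ∈ K) (hmin : ∀ w ∈ K, ‖y + η • v - p‖ ≤ ‖y + η • v - w‖) :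
    ‖p - y‖ ^ 2 ≤ η * ⟪v, p - y⟫ := by
  have h := real_inner_sub_sub_nonpos_of_forall_norm_sub_le hK hp hmin hy
  rw [show y + η • v - p = η • v - (p - y) by abel, show y - p = -(p - y) by abel,
    inner_neg_right, inner_sub_left, real_inner_smul_left, real_inner_self_eq_norm_sq] at h
  linarith

lemma real_inner_le_half_mul_sq_add_sq_div {ε : ℝ} (hε : 0 < ε) (p q : E) :
    ⟪p, q⟫ ≤ ε / 2 * ‖p‖ ^ 2 + ‖q‖ ^ 2 / (2 * ε) :=
  (real_inner_le_norm p q).trans (mul_le_half_mul_sq_add_sq_div hε _ _)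

end InnerProductSpace

section JointLipschitz

variable {E F G H : Type*} [SeminormedAddCommGroup E] [SeminormedAddCommGroup F]
  [SeminormedAddCommGroup G] [SeminormedAddCommGroup H] {gx : E → F → G} {gy : E → F → H}
  {M : ℝ}

lemma norm_sub_le_mul_of_joint_lipschitz_fst
    (hlip : ∀ x₁ x₂ y₁ y₂, √(‖gx x₁ y₁ - gx x₂ y₂‖ ^ 2 + ‖gy x₁ y₁ - gy x₂ y₂‖ ^ 2)
      ≤ M * √(‖x₁ - x₂‖ ^ 2 + ‖y₁ - y₂‖ ^ 2)) (x₁ x₂ : E) (y : F) :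
    ‖gx x₁ y - gx x₂ y‖ ≤ M * ‖x₁ - x₂‖ ∧ ‖gy x₁ y - gy x₂ y‖ ≤ M * ‖x₁ - x₂‖ := by
  have h := hlip x₁ x₂ y y
  simp only [sub_self, norm_zero, ne_eq, OfNat.ofNat_ne_zero, not_false_eq_true, zero_pow,
    add_zero, Real.sqrt_sq (norm_nonneg _)] at h
  exact le_and_le_of_sqrt_sq_add_sq_le h

lemma norm_sub_le_mul_of_joint_lipschitz_snd
    (hlip : ∀ x₁ x₂ y₁ y₂, √(‖gx x₁ y₁ - gx x₂ y₂‖ ^ 2 + ‖gy x₁ y₁ - gy x₂ y₂‖ ^ 2)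
      ≤ M * √(‖x₁ - x₂‖ ^ 2 + ‖y₁ - y₂‖ ^ 2)) (x : E) (y₁ y₂ : F) :
    ‖gx x y₁ - gx x y₂‖ ≤ M * ‖y₁ - y₂‖ ∧ ‖gy x y₁ - gy x y₂‖ ≤ M * ‖y₁ - y₂‖ := by
  have h := hlip x x y₁ y₂
  simp only [sub_self, norm_zero, ne_eq, OfNat.ofNat_ne_zero, not_false_eq_true, zero_pow,
    zero_add, Real.sqrt_sq (norm_nonneg _)] at h
  exact le_and_le_of_sqrt_sq_add_sq_le h

end JointLipschitz

section DescentAscent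

variable {E F : Type*} [NormedAddCommGroup E] [InnerProductSpace ℝ E] [CompleteSpace E]
  [NormedAddCommGroup F] [InnerProductSpace ℝ F] [CompleteSpace F]

theorem descent_ascent_step_unscaled {f : E → F → ℝ} {fx : E → F → E} {fy : E → F → F}
    {M η : ℝ} (hfx : ∀ x y, HasGradientAt (fun x' => f x' y) (fx x y) x)
    (hfy : ∀ x y, HasGradientAt (fun y' => f x y') (fy x y) y)
    (hlip_xx : ∀ x₁ x₂ y, ‖fx x₁ y - fx x₂ y‖ ≤ M * ‖x₁ - x₂‖)
    (hlip_xy : ∀ x y₁ y₂, ‖fx x y₁ - fx x y₂‖ ≤ M * ‖y₁ - y₂‖)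
    (hlip_yy : ∀ x y₁ y₂, ‖fy x y₁ - fy x y₂‖ ≤ M * ‖y₁ - y₂‖)
    (hη : 0 < η) {x x' u : E} {y y' v : F} (hascent : ‖y' - y‖ ^ 2 ≤ η * ⟪v, y' - y⟫) :
    -f x' y' ≤ -f x y + ⟪u, x - x'⟫ + (M / 2 + η * M ^ 2 + 1 / (2 * η)) * ‖x - x'‖ ^ 2 +
      η / 2 * ‖fx x y - u‖ ^ 2 - (1 / (4 * η) - M / 2) * ‖y' - y‖ ^ 2 +
      η / 2 * ‖fy x y - v‖ ^ 2 := by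
  have step_y := le_image_of_gradient_lipschitz (hfy x) (hlip_yy x · y) y'
  have step_x := le_image_of_gradient_lipschitz (hfx · y') (hlip_xx · x y') x'
  rw [norm_sub_rev x'] at step_x
  set a := x - x'
  set b := y' - y
  have hv : ‖b‖ ^ 2 / η ≤ ⟪v, b⟫ := by rw [div_le_iff₀ hη]; linarith
  have split_x : ⟪fx x y', x' - x⟫ = -⟪u, a⟫ - ⟪fx x y' - fx x y, a⟫ - ⟪fx x y - u, a⟫ := by
    rw [show x' - x = -a by simp [a], inner_neg_right, inner_sub_left, inner_sub_left]; ring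
  have split_y : ⟪fy x y, b⟫ = ⟪v, b⟫ - ⟪v - fy x y, b⟫ := by rw [inner_sub_left]; ring
  -- Young's inequality with weight `2η` on the coupling term and `η` on the gradient errors.
  have cross_xy : ⟪fx x y' - fx x y, a⟫ ≤ η * M ^ 2 * ‖a‖ ^ 2 + ‖b‖ ^ 2 / (4 * η) :=
    calc ⟪fx x y' - fx x y, a⟫ ≤ ‖fx x y' - fx x y‖ * ‖a‖ := real_inner_le_norm _ _
      _ ≤ M * ‖a‖ * ‖b‖ := by nlinarith [hlip_xy x y' y, norm_nonneg a]
      _ ≤ 2 * η / 2 * (M * ‖a‖) ^ 2 + ‖b‖ ^ 2 / (2 * (2 * η)) :=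
        mul_le_half_mul_sq_add_sq_div (by positivity) _ _
      _ = η * M ^ 2 * ‖a‖ ^ 2 + ‖b‖ ^ 2 / (4 * η) := by ring
  have cross_x := real_inner_le_half_mul_sq_add_sq_div hη (fx x y - u) a
  have cross_y := real_inner_le_half_mul_sq_add_sq_div hη (v - fy x y) b
  rw [norm_sub_rev v] at cross_y
  linear_combination step_x + step_y + hv + cross_xy + cross_x + cross_y - split_x - split_y

end DescentAscent

theorem descent_ascent_step_general (dx dy : ℕ)
    (Y : Set (Euc dy)) (hYconv : Convex ℝ Y)
    (M : ℝ)
    (f : Euc dx → Euc dy → ℝ)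
    (fx : Euc dx → Euc dy → Euc dx) (fy : Euc dx → Euc dy → Euc dy)
    (hfx : ∀ x y, HasGradientAt (fun x' => f x' y) (fx x y) x)
    (hfy : ∀ x y, HasGradientAt (fun y' => f x y') (fy x y) y)
    (hgradlip : ∀ x₁ x₂ : Euc dx, ∀ y₁ y₂ : Euc dy,
      Real.sqrt (‖fx x₁ y₁ - fx x₂ y₂‖ ^ 2 + ‖fy x₁ y₁ - fy x₂ y₂‖ ^ 2)
        ≤ M * Real.sqrt (‖x₁ - x₂‖ ^ 2 + ‖y₁ - y₂‖ ^ 2))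
    (projX : Euc dx → Euc dx)
    (projY : Euc dy → Euc dy)
    (hprojY : ∀ z, projY z ∈ Y ∧ ∀ w ∈ Y, ‖z - projY z‖ ≤ ‖z - w‖)
    (x : Euc dx) (y : Euc dy) (hy : y ∈ Y)
    (u : Euc dx) (v : Euc dy) (ηx ηy : ℝ) (hηx : 0 < ηx) (hηy : 0 < ηy) :
    -f (projX (x - ηx • u)) (projY (y + ηy • v)) ≤
      -f x y + ηx * ⟪u, ηx⁻¹ • (x - projX (x - ηx • u))⟫ +
        (ηx ^ 2 * M / 2 + ηx ^ 2 * ηy * M ^ 2 + ηx ^ 2 / (2 * ηy)) *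
          ‖ηx⁻¹ • (x - projX (x - ηx • u))‖ ^ 2 +
        ηy / 2 * ‖fx x y - u‖ ^ 2 -
        (ηy / 4 - ηy ^ 2 * M / 2) * ‖ηy⁻¹ • (projY (y + ηy • v) - y)‖ ^ 2 +
        ηy / 2 * ‖fy x y - v‖ ^ 2 := by
  obtain ⟨hmem, hmin⟩ := hprojY (y + ηy • v)
  have hascent := norm_sq_le_inner_of_forall_norm_sub_le hYconv hy hmem hmin
  have key := descent_ascent_step_unscaled hfx hfy
    (fun x₁ x₂ y => (norm_sub_le_mul_of_joint_lipschitz_fst hgradlip x₁ x₂ y).1)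
    (fun x y₁ y₂ => (norm_sub_le_mul_of_joint_lipschitz_snd hgradlip x y₁ y₂).1)
    (fun x y₁ y₂ => (norm_sub_le_mul_of_joint_lipschitz_snd hgradlip x y₁ y₂).2)
    hηy (x := x) (x' := projX (x - ηx • u)) (u := u) hascent
  convert key using 2
  rw [real_inner_smul_right, norm_smul, norm_smul, Real.norm_eq_abs, Real.norm_eq_abs,
    abs_inv, abs_inv, abs_of_pos hηx, abs_of_pos hηy]
  field_simp

/-- one-step descent-ascent inequality for a smooth objective with `M`-Lipschitz
gradient. With `x⁺ = Π_X(x − η_x u)`, `y⁺ = Π_Y(y + η_y v)`, `ũ = (x − x⁺)/η_x`,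
`ṽ = (y⁺ − y)/η_y`:
`−f(x⁺,y⁺) ≤ −f(x,y) + η_x⟨u,ũ⟩ + (η_x²M/2 + η_x²η_yM² + η_x²/(2η_y))‖ũ‖²
  + (η_y/2)‖∇_xf(x,y) − u‖² − (η_y/4 − η_y²M/2)‖ṽ‖² + (η_y/2)‖∇_yf(x,y) − v‖²`. -/
theorem descent_ascent_step (dx dy : ℕ)
    (X : Set (Euc dx)) (hXne : X.Nonempty) (hXcl : IsClosed X) (hXconv : Convex ℝ X)
    (Y : Set (Euc dy)) (hYne : Y.Nonempty) (hYcl : IsClosed Y) (hYconv : Convex ℝ Y)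
    (M : ℝ) (hM : 0 < M)
    (f : Euc dx → Euc dy → ℝ)
    (fx : Euc dx → Euc dy → Euc dx) (fy : Euc dx → Euc dy → Euc dy)
    (hfx : ∀ x y, HasGradientAt (fun x' => f x' y) (fx x y) x)
    (hfy : ∀ x y, HasGradientAt (fun y' => f x y') (fy x y) y)
    (hgradlip : ∀ x₁ x₂ : Euc dx, ∀ y₁ y₂ : Euc dy,
      Real.sqrt (‖fx x₁ y₁ - fx x₂ y₂‖ ^ 2 + ‖fy x₁ y₁ - fy x₂ y₂‖ ^ 2)
        ≤ M * Real.sqrt (‖x₁ - x₂‖ ^ 2 + ‖y₁ - y₂‖ ^ 2))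
    (projX : Euc dx → Euc dx)
    (hprojX : ∀ z, projX z ∈ X ∧ ∀ w ∈ X, ‖z - projX z‖ ≤ ‖z - w‖)
    (projY : Euc dy → Euc dy)
    (hprojY : ∀ z, projY z ∈ Y ∧ ∀ w ∈ Y, ‖z - projY z‖ ≤ ‖z - w‖)
    (x : Euc dx) (hx : x ∈ X) (y : Euc dy) (hy : y ∈ Y)
    (u : Euc dx) (v : Euc dy) (ηx ηy : ℝ) (hηx : 0 < ηx) (hηy : 0 < ηy) :
    -f (projX (x - ηx • u)) (projY (y + ηy • v)) ≤
      -f x y + ηx * ⟪u, ηx⁻¹ • (x - projX (x - ηx • u))⟫ +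
        (ηx ^ 2 * M / 2 + ηx ^ 2 * ηy * M ^ 2 + ηx ^ 2 / (2 * ηy)) *
          ‖ηx⁻¹ • (x - projX (x - ηx • u))‖ ^ 2 +
        ηy / 2 * ‖fx x y - u‖ ^ 2 -
        (ηy / 4 - ηy ^ 2 * M / 2) * ‖ηy⁻¹ • (projY (y + ηy • v) - y)‖ ^ 2 +
        ηy / 2 * ‖fy x y - v‖ ^ 2 :=
  descent_ascent_step_general dx dy Y hYconv M f fx fy hfx hfy hgradlip projX projY hprojY x y hy u
    v ηx ηy hηx hηy
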